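/- Let v, w ∈ ℂⁿ be unit vectors and let (x₁,x₂), (t₁,t₂) ∈ ℝ × (0,∞). If √x₂ · |⟨H(2√x₂·r + x₁), v⟩|² = √t₂ · |⟨H(2√t₂·r + t₁), w⟩|² for every r ∈ ℝ, then x₁ = t₁ and x₂ = t₂. -/

import Mathlib

/-!
Each Hermite function is `h_j(y) = ĥ_j(y) e^{-y²/2}` with `ĥ_j` a real polynomial of degree exactly
`j`, so `|⟨H(y), v⟩|² = e^{-y²} Q_v(y)` for a real polynomial `Q_v`, which is nonzero when `v ≠ 0`
because the `ĥ_j` are linearly independent. The hypothesis therefore says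
`e^{-(a r + x₁)²} P(r) = e^{-(b r + t₁)²} Q(r)` with `a = 2√x₂`, `b = 2√t₂` and nonzero
polynomials `P`, `Q`. If `(a, x₁) ≠ (b, t₁)`, one of the two Gaussians decays faster than the other
by a factor at most `e^{-δ r}` as `r → ∞`; since a polynomial times `e^{-δ r}` tends to `0`, this
forces `P = 0` or `Q = 0`.
-/

open MeasureTheory Filter Topology

noncomputable section

/-- The physicists' Hermite polynomial `H_m(y) = (−1)^m e^{y²} (d/dy)^m e^{−y²}`. -/
def hermiteH (m : ℕ) (y : ℝ) : ℝ :=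
  (-1 : ℝ) ^ m * Real.exp (y ^ 2) * iteratedDeriv m (fun x => Real.exp (-x ^ 2)) y

/-- The Hermite function `h_m(y) = (2^m m! √π)^{−1/2} H_m(y) e^{−y²/2}`. -/
def hermiteFun (m : ℕ) (y : ℝ) : ℝ :=
  (Real.sqrt (2 ^ m * m.factorial * Real.sqrt Real.pi))⁻¹ * hermiteH m y *
    Real.exp (-y ^ 2 / 2)


/-- `H(y) = (h_0(y), …, h_{n−1}(y))ᵀ`, viewed in `ℂⁿ`. -/
def HvecC (n : ℕ) (y : ℝ) : Fin n → ℂ := fun j => (hermiteFun j y : ℂ)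

open Polynomial Asymptotics
open scoped Nat

theorem Polynomial.comp_C_mul_X_add_C_ne_zero {R : Type*} [Semiring R] [NoZeroDivisors R]
    {p : R[X]} {a : R} (hp : p ≠ 0) (ha : a ≠ 0) (c : R) : p.comp (C a * X + C c) ≠ 0 := by
  simp only [Ne, comp_eq_zero_iff, hp, false_or, not_and]
  intro _ h
  simpa [ha] using congrArg (coeff · 1) h

theorem Polynomial.isLittleO_exp_mul_atTop (q : ℝ[X]) {δ : ℝ} (hδ : 0 < δ) :
    (fun r => q.eval r) =o[atTop] fun r => Real.exp (δ * r) :=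
  ((isBigO_atTop_of_degree_le q (X ^ q.natDegree) (by simp [degree_le_natDegree])).trans
    (by simpa using (isBigO_refl (fun r : ℝ => r ^ q.natDegree) atTop))).trans_isLittleO
    (isLittleO_pow_exp_pos_mul_atTop _ hδ)

theorem Polynomial.eq_zero_of_eval_eq_mul_exp_neg {p q : ℝ[X]} {E : ℝ → ℝ} {δ : ℝ} (hδ : 0 < δ)
    (hE : ∀ᶠ r in atTop, δ * r ≤ E r) (h : ∀ r, p.eval r = q.eval r * Real.exp (-E r)) :
    p = 0 := by
  have hlim : Tendsto (fun r => p.eval r) atTop (𝓝 0) := by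
    refine squeeze_zero_norm' ?_
      (by simpa using (q.isLittleO_exp_mul_atTop hδ).tendsto_div_nhds_zero.norm)
    filter_upwards [hE] with r hr
    rw [h, norm_mul, Real.norm_eq_abs, Real.norm_of_nonneg (Real.exp_pos _).le, div_eq_mul_inv,
      ← Real.exp_neg]
    gcongr
  exact leadingCoeff_eq_zero.mp ((tendsto_nhds_iff p).mp hlim).1

theorem eq_zero_of_exp_neg_sq_mul_eval_eq {p q : ℝ[X]} {a b c d : ℝ} (ha : 0 < a)
    (hlex : a < b ∨ a = b ∧ c < d)
    (h : ∀ r, Real.exp (-(a * r + c) ^ 2) * p.eval r = Real.exp (-(b * r + d) ^ 2) * q.eval r) :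
    p = 0 := by
  obtain ⟨δ, hδ, hE⟩ : ∃ δ, 0 < δ ∧ ∀ᶠ r in atTop, δ * r ≤ (b * r + d) ^ 2 - (a * r + c) ^ 2 := by
    rcases hlex with hab | ⟨rfl, hcd⟩
    · have hgap : Tendsto (fun r => r * ((b ^ 2 - a ^ 2) * r + (2 * (b * d - a * c) - 1)) +
          (d ^ 2 - c ^ 2)) atTop atTop :=
        tendsto_atTop_add_const_right _ _ (tendsto_id.atTop_mul_atTop₀
          (tendsto_atTop_add_const_right _ _ (tendsto_id.const_mul_atTop (by nlinarith))))
      refine ⟨1, one_pos, ?_⟩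
      filter_upwards [hgap.eventually_ge_atTop 0] with r hr
      linarith
    · have hgap : Tendsto (fun r => a * (d - c) * r + (d ^ 2 - c ^ 2)) atTop atTop :=
        tendsto_atTop_add_const_right _ _ (tendsto_id.const_mul_atTop (by nlinarith))
      refine ⟨a * (d - c), by nlinarith, ?_⟩
      filter_upwards [hgap.eventually_ge_atTop 0] with r hr
      linarith
  refine eq_zero_of_eval_eq_mul_exp_neg (q := q) hδ hE fun r => ?_
  have hexp : Real.exp (-((b * r + d) ^ 2 - (a * r + c) ^ 2)) * Real.exp (-(a * r + c) ^ 2) =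
      Real.exp (-(b * r + d) ^ 2) := by
    rw [← Real.exp_add]; ring_nf
  apply mul_left_cancel₀ (Real.exp_pos (-(a * r + c) ^ 2)).ne'
  rw [h r, ← hexp]
  ring

theorem eq_of_exp_neg_sq_mul_eval_eq {p q : ℝ[X]} {a b c d : ℝ} (hp : p ≠ 0) (hq : q ≠ 0)
    (ha : 0 < a) (hb : 0 < b)
    (h : ∀ r, Real.exp (-(a * r + c) ^ 2) * p.eval r = Real.exp (-(b * r + d) ^ 2) * q.eval r) :
    a = b ∧ c = d := by
  have h' r := (h r).symm
  rcases lt_trichotomy a b with hab | rfl | hab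
  · exact absurd (eq_zero_of_exp_neg_sq_mul_eval_eq ha (.inl hab) h) hp
  · rcases lt_trichotomy c d with hcd | rfl | hcd
    · exact absurd (eq_zero_of_exp_neg_sq_mul_eval_eq ha (.inr ⟨rfl, hcd⟩) h) hp
    · exact ⟨rfl, rfl⟩
    · exact absurd (eq_zero_of_exp_neg_sq_mul_eval_eq ha (.inr ⟨rfl, hcd⟩) h') hq
  · exact absurd (eq_zero_of_exp_neg_sq_mul_eval_eq hb (.inl hab) h') hq

/-- `H_m(y) = 2^{m/2} He_m(√2 y)`, where `He_m` is Mathlib's probabilists' `hermite m`. -/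
def physHermite (m : ℕ) : ℝ[X] :=
  C (√2 ^ m) * ((hermite m).map (Int.castRingHom ℝ)).comp (C √2 * X)

theorem degree_physHermite (m : ℕ) : (physHermite m).degree = m := by
  have h2 : (√2 : ℝ) ≠ 0 := by positivity
  have hlin : (C √2 * X).natDegree = 1 := natDegree_C_mul_X _ h2
  have hinj := RingHom.injective_int (Int.castRingHom ℝ)
  have hcomp : ((hermite m).map (Int.castRingHom ℝ)).comp (C √2 * X) ≠ 0 := by
    rw [Ne, ← leadingCoeff_eq_zero, leadingCoeff_comp (by omega),
      leadingCoeff_map_of_injective hinj, leadingCoeff_hermite, leadingCoeff_C_mul_X]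
    simp [h2]
  rw [physHermite, degree_C_mul (pow_ne_zero _ h2), degree_eq_natDegree hcomp, natDegree_comp,
    natDegree_map_eq_of_injective hinj, natDegree_hermite, hlin, mul_one]

theorem eval_physHermite (m : ℕ) (y : ℝ) :
    (physHermite m).eval y = √2 ^ m * aeval (√2 * y) (hermite m) := by
  simp [physHermite, eval_comp, aeval_def, eval_map]

theorem hermiteH_eq_eval_physHermite (m : ℕ) (y : ℝ) : hermiteH m y = (physHermite m).eval y := by
  have hgauss : (fun x : ℝ => Real.exp (-x ^ 2)) = fun x => Real.exp (-((√2 * x) ^ 2 / 2)) := by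
    funext x; congr 1; rw [mul_pow, Real.sq_sqrt zero_le_two]; ring
  rw [hermiteH, hgauss, iteratedDeriv_comp_const_mul (f := fun z => Real.exp (-(z ^ 2 / 2)))
    (by fun_prop), iteratedDeriv_eq_iterate]
  beta_reduce
  rw [deriv_gaussian_eq_hermite_mul_gaussian, eval_physHermite, ← congrFun hgauss y]
  have hsign : (-1 : ℝ) ^ m * (-1) ^ m = 1 := by rw [← mul_pow]; norm_num
  have hexp : Real.exp (y ^ 2) * Real.exp (-y ^ 2) = 1 := by rw [← Real.exp_add]; simp
  linear_combination (√2 ^ m * aeval (√2 * y) (hermite m)) *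
    (Real.exp (y ^ 2) * Real.exp (-y ^ 2) * hsign + hexp)

def normalizedHermite : Polynomial.Sequence ℝ where
  elems' m := C (√(2 ^ m * m ! * √Real.pi))⁻¹ * physHermite m
  degree_eq' m := by rw [degree_C_mul (by positivity), degree_physHermite]

theorem hermiteFun_eq_eval_mul_exp (m : ℕ) (y : ℝ) :
    hermiteFun m y = (normalizedHermite m).eval y * Real.exp (-y ^ 2 / 2) := by
  simp [hermiteFun, hermiteH_eq_eval_physHermite, normalizedHermite]

section HermiteSeries

variable {n : ℕ}

def hermiteSeries (c : Fin n → ℝ) : ℝ[X] := ∑ j, c j • normalizedHermite j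

theorem sum_mul_hermiteFun (c : Fin n → ℝ) (y : ℝ) :
    ∑ j, c j * hermiteFun j y = (hermiteSeries c).eval y * Real.exp (-y ^ 2 / 2) := by
  simp [hermiteSeries, hermiteFun_eq_eval_mul_exp, eval_finsetSum, Finset.sum_mul, mul_assoc]

theorem hermiteSeries_eq_zero {c : Fin n → ℝ} (h : hermiteSeries c = 0) : c = 0 :=
  funext <| Fintype.linearIndependent_iff.mp
    (normalizedHermite.linearIndependent.comp Fin.val Fin.val_injective) c h

def hermiteNormSq (v : Fin n → ℂ) : ℝ[X] :=
  hermiteSeries (fun j => (v j).re) ^ 2 + hermiteSeries (fun j => (v j).im) ^ 2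

theorem norm_dotProduct_HvecC_sq (v : Fin n → ℂ) (y : ℝ) :
    ‖star v ⬝ᵥ HvecC n y‖ ^ 2 = Real.exp (-y ^ 2) * (hermiteNormSq v).eval y := by
  have hdot : star v ⬝ᵥ HvecC n y = ((∑ j, (v j).re * hermiteFun j y : ℝ) : ℂ) -
      ((∑ j, (v j).im * hermiteFun j y : ℝ) : ℂ) * Complex.I := by
    simp only [dotProduct, HvecC, Pi.star_apply, Complex.ofReal_sum, Finset.sum_mul,
      ← Finset.sum_sub_distrib]
    refine Finset.sum_congr rfl fun j _ => ?_
    apply Complex.ext <;> simp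
  have hexp : Real.exp (-y ^ 2 / 2) ^ 2 = Real.exp (-y ^ 2) := by
    rw [← Real.exp_nat_mul]; ring_nf
  rw [hdot, sum_mul_hermiteFun, sum_mul_hermiteFun, Complex.sq_norm, Complex.normSq_apply,
    hermiteNormSq]
  simp only [Complex.sub_re, Complex.sub_im, Complex.mul_re, Complex.mul_im, Complex.ofReal_re,
    Complex.ofReal_im, Complex.I_re, Complex.I_im, eval_add, eval_pow]
  linear_combination ((hermiteSeries fun j => (v j).re).eval y ^ 2 +
    (hermiteSeries fun j => (v j).im).eval y ^ 2) * hexp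

theorem hermiteNormSq_ne_zero {v : Fin n → ℂ} (hv : v ≠ 0) : hermiteNormSq v ≠ 0 := by
  intro h
  have hparts (y : ℝ) : (hermiteSeries fun j => (v j).re).eval y = 0 ∧
      (hermiteSeries fun j => (v j).im).eval y = 0 := by
    simpa [hermiteNormSq, sq, mul_self_add_mul_self_eq_zero] using congrArg (eval y) h
  have hre := hermiteSeries_eq_zero (Polynomial.funext fun y => by simpa using (hparts y).1)
  have him := hermiteSeries_eq_zero (Polynomial.funext fun y => by simpa using (hparts y).2)
  exact hv (funext fun j => Complex.ext (congrFun hre j) (congrFun him j))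

end HermiteSeries

theorem separation_of_interior_points_general (n : ℕ)
    (v w : Fin n → ℂ)
    (hv : dotProduct (star v) v = 1) (hw : dotProduct (star w) w = 1)
    (x₁ x₂ t₁ t₂ : ℝ) (hx₂ : 0 < x₂) (ht₂ : 0 < t₂)
    (h : ∀ r : ℝ,
      Real.sqrt x₂ * ‖dotProduct (star v) (HvecC n (2 * Real.sqrt x₂ * r + x₁))‖ ^ 2 =
      Real.sqrt t₂ * ‖dotProduct (star w) (HvecC n (2 * Real.sqrt t₂ * r + t₁))‖ ^ 2) :
    x₁ = t₁ ∧ x₂ = t₂ := by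
  have hpoly {u : Fin n → ℂ} (hu : star u ⬝ᵥ u = 1) {s : ℝ} (hs : 0 < s) (c : ℝ) :
      C √s * (hermiteNormSq u).comp (C (2 * √s) * X + C c) ≠ 0 := by
    have hu0 : u ≠ 0 := by rintro rfl; simp at hu
    exact mul_ne_zero (C_ne_zero.mpr (by positivity))
      (comp_C_mul_X_add_C_ne_zero (hermiteNormSq_ne_zero hu0) (by positivity) c)
  obtain ⟨hscale, hshift⟩ := eq_of_exp_neg_sq_mul_eval_eq
    (a := 2 * √x₂) (b := 2 * √t₂) (c := x₁) (d := t₁)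
    (hpoly hv hx₂ x₁) (hpoly hw ht₂ t₁) (by positivity) (by positivity)
    (fun r => by simpa [eval_comp, norm_dotProduct_HvecC_sq, mul_left_comm] using h r)
  exact ⟨hshift, (Real.sqrt_inj hx₂.le ht₂.le).mp (by linarith)⟩

/-- If `v, w` are unit vectors in `ℂⁿ` and
`√x₂ |⟨H(2√x₂ r + x₁), v⟩|² = √t₂ |⟨H(2√t₂ r + t₁), w⟩|²` for all `r ∈ ℝ`, then
`(x₁,x₂) = (t₁,t₂)`. -/
theorem separation_of_interior_points (n : ℕ) (hn : 1 ≤ n)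
    (v w : Fin n → ℂ)
    (hv : dotProduct (star v) v = 1) (hw : dotProduct (star w) w = 1)
    (x₁ x₂ t₁ t₂ : ℝ) (hx₂ : 0 < x₂) (ht₂ : 0 < t₂)
    (h : ∀ r : ℝ,
      Real.sqrt x₂ * ‖dotProduct (star v) (HvecC n (2 * Real.sqrt x₂ * r + x₁))‖ ^ 2 =
      Real.sqrt t₂ * ‖dotProduct (star w) (HvecC n (2 * Real.sqrt t₂ * r + t₁))‖ ^ 2) :
    x₁ = t₁ ∧ x₂ = t₂ :=
  separation_of_interior_points_general n v w hv hw x₁ x₂ t₁ t₂ hx₂ ht₂ h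

end
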